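/- Let A be a complex Banach algebra and let σ, τ be bounded algebra endomorphisms of A. If A is approximately (σ-τ)-contractible (for every Banach A-bimodule X and every approximate (σ-τ)-derivation f : A → X there exist β > 0 and x ∈ X such that ‖xσ(a) − τ(a)x − f(a)‖ ≤ β for all a ∈ A), then A is (σ-τ)-contractible: for every Banach A-bimodule X, every bounded (σ-τ)-derivation d : A → X is (σ-τ)-inner. -/

import Mathlib

open Filter Topology

/-- A Banach bimodule over a complex Banach algebra `A`:
a complex Banach space `X` with continuous bilinear left and right actions of `A`
which are associative and commute with each other (`a (x b) = (a x) b`). -/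
structure BanachBimodule (A : Type*) [NonUnitalNormedRing A] [NormedSpace ℂ A]
    (X : Type*) [NormedAddCommGroup X] [NormedSpace ℂ X] [CompleteSpace X] where
  lsmul : A →L[ℂ] X →L[ℂ] X
  rsmul : A →L[ℂ] X →L[ℂ] X
  lsmul_mul : ∀ (a b : A) (x : X), lsmul (a * b) x = lsmul a (lsmul b x)
  rsmul_mul : ∀ (a b : A) (x : X), rsmul (a * b) x = rsmul b (rsmul a x)
  middle : ∀ (a b : A) (x : X), lsmul a (rsmul b x) = rsmul b (lsmul a x)

/-- `f : A → X` is an approximate `(σ-τ)`-derivation: `f 0 = 0`, `f` is continuous at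
some point, and for some `α > 0` it is approximately `T`-additive and approximately
satisfies the `(σ-τ)`-derivation identity, within `α`. -/
def IsApproxSigmaTauDerivation {A : Type*} [NonUnitalNormedRing A] [NormedSpace ℂ A]
    {X : Type*} [NormedAddCommGroup X] [NormedSpace ℂ X] [CompleteSpace X]
    (M : BanachBimodule A X) (σ τ : A →L[ℂ] A) (f : A → X) : Prop :=
  f 0 = 0 ∧ (∃ a₀ : A, ContinuousAt f a₀) ∧
    ∃ α : ℝ, 0 < α ∧
      (∀ l : ℂ, ‖l‖ = 1 → ∀ a b : A,
        ‖f (l • a + l • b) - l • f a - l • f b‖ ≤ α) ∧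
      (∀ a b : A, ‖f (a * b) - M.rsmul (σ b) (f a) - M.lsmul (τ a) (f b)‖ ≤ α)

/-! A bounded `(σ-τ)`-derivation is in particular an approximate one, so approximate
contractibility puts it within a uniform distance `β` of an inner derivation `δₓ`.
The difference `δₓ - d` is additive, hence `‖δₓ (n a) - d (n a)‖ = n ‖δₓ a - d a‖ ≤ β`
for every `n : ℕ`, which forces `δₓ a = d a`. -/

theorem eq_zero_of_forall_norm_nsmul_le (𝕜 : Type*) [RCLike 𝕜] {F : Type*}
    [NormedAddCommGroup F] [NormedSpace 𝕜 F] {v : F} {β : ℝ} (h : ∀ n : ℕ, ‖n • v‖ ≤ β) :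
    v = 0 := by
  by_contra hv
  have hpos : 0 < ‖v‖ := norm_pos_iff.mpr hv
  obtain ⟨n, hn⟩ := exists_nat_gt (β / ‖v‖)
  have hle : (n : ℝ) * ‖v‖ ≤ β := by simpa [RCLike.norm_nsmul 𝕜] using h n
  exact not_lt.mpr hle ((div_lt_iff₀ hpos).mp hn)

theorem ContinuousLinearMap.eq_of_norm_sub_le {𝕜 E F : Type*} [RCLike 𝕜]
    [NormedAddCommGroup E] [NormedSpace 𝕜 E] [NormedAddCommGroup F] [NormedSpace 𝕜 F]
    (f g : E →L[𝕜] F) {β : ℝ} (h : ∀ a, ‖f a - g a‖ ≤ β) : f = g :=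
  ext fun a => sub_eq_zero.mp <| eq_zero_of_forall_norm_nsmul_le 𝕜 fun n => by
    simpa only [map_nsmul, ← smul_sub] using h (n • a)

section Derivations

variable {A : Type*} [NonUnitalNormedRing A] [NormedSpace ℂ A]
  {X : Type*} [NormedAddCommGroup X] [NormedSpace ℂ X] [CompleteSpace X]

theorem BanachBimodule.isApproxSigmaTauDerivation_of_derivation (M : BanachBimodule A X)
    {σ τ : A →L[ℂ] A} (d : A →L[ℂ] X)
    (hd : ∀ a b : A, d (a * b) = M.rsmul (σ b) (d a) + M.lsmul (τ a) (d b)) :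
    IsApproxSigmaTauDerivation M σ τ d :=
  ⟨map_zero d, ⟨0, d.continuous.continuousAt⟩, 1, one_pos,
    fun l _ a b => by
      rw [map_add, map_smul, map_smul, add_sub_cancel_left, sub_self, norm_zero]
      exact zero_le_one,
    fun a b => by
      rw [hd a b, add_sub_cancel_left, sub_self, norm_zero]
      exact zero_le_one⟩

noncomputable def BanachBimodule.innerDerivation (M : BanachBimodule A X) (σ τ : A →L[ℂ] A)
    (x : X) : A →L[ℂ] X :=
  (M.rsmul.flip x).comp σ - (M.lsmul.flip x).comp τ

theorem BanachBimodule.innerDerivation_apply (M : BanachBimodule A X) (σ τ : A →L[ℂ] A)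
    (x : X) (a : A) : M.innerDerivation σ τ x a = M.rsmul (σ a) x - M.lsmul (τ a) x :=
  rfl

end Derivations

theorem contractible_of_approx_contractible_general
    {A : Type*} [NonUnitalNormedRing A] [NormedSpace ℂ A]
    (σ τ : A →L[ℂ] A)
    (happrox : ∀ (X : Type) [NormedAddCommGroup X] [NormedSpace ℂ X] [CompleteSpace X]
      (M : BanachBimodule A X) (f : A → X),
      IsApproxSigmaTauDerivation M σ τ f →
      ∃ β : ℝ, 0 < β ∧ ∃ x : X, ∀ a : A,
        ‖M.rsmul (σ a) x - M.lsmul (τ a) x - f a‖ ≤ β) :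
    ∀ (X : Type) [NormedAddCommGroup X] [NormedSpace ℂ X] [CompleteSpace X]
      (M : BanachBimodule A X) (d : A →L[ℂ] X),
      (∀ a b : A, d (a * b) = M.rsmul (σ b) (d a) + M.lsmul (τ a) (d b)) →
      ∃ x : X, ∀ a : A, d a = M.rsmul (σ a) x - M.lsmul (τ a) x := by
  intro X _ _ _ M d hd
  obtain ⟨β, -, x, hx⟩ :=
    happrox X M d (M.isApproxSigmaTauDerivation_of_derivation d hd)
  have hinner : M.innerDerivation σ τ x = d := ContinuousLinearMap.eq_of_norm_sub_le _ _ hx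
  exact ⟨x, fun a => by rw [← hinner, M.innerDerivation_apply]⟩

/-- The converse half of Theorem 3.1 of the paper: if the complex Banach algebra `A`
is approximately `(σ-τ)`-contractible (every approximate `(σ-τ)`-derivation into any
Banach `A`-bimodule is within a uniform bound of an inner one), then `A` is
`(σ-τ)`-contractible: every bounded `(σ-τ)`-derivation is `(σ-τ)`-inner. -/
theorem contractible_of_approx_contractible
    {A : Type*} [NonUnitalNormedRing A] [NormedSpace ℂ A]
    [IsScalarTower ℂ A A] [SMulCommClass ℂ A A] [CompleteSpace A]
    (σ τ : A →L[ℂ] A)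
    (hσ : ∀ a b : A, σ (a * b) = σ a * σ b) (hτ : ∀ a b : A, τ (a * b) = τ a * τ b)
    (happrox : ∀ (X : Type) [NormedAddCommGroup X] [NormedSpace ℂ X] [CompleteSpace X]
      (M : BanachBimodule A X) (f : A → X),
      IsApproxSigmaTauDerivation M σ τ f →
      ∃ β : ℝ, 0 < β ∧ ∃ x : X, ∀ a : A,
        ‖M.rsmul (σ a) x - M.lsmul (τ a) x - f a‖ ≤ β) :
    ∀ (X : Type) [NormedAddCommGroup X] [NormedSpace ℂ X] [CompleteSpace X]
      (M : BanachBimodule A X) (d : A →L[ℂ] X),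
      (∀ a b : A, d (a * b) = M.rsmul (σ b) (d a) + M.lsmul (τ a) (d b)) →
      ∃ x : X, ∀ a : A, d a = M.rsmul (σ a) x - M.lsmul (τ a) x :=
  contractible_of_approx_contractible_general σ τ happrox
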